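/- Let Δ be a partition of {1,…,n} with block sizes n_δ, and let w_δ > 0 (δ ∈ Δ) and w_d > 0 (d ∈ {1,…,n}) be weights. The n-dimensional Lebesgue volume of H = {x ∈ ℝⁿ : ∑_{δ∈Δ} w_δ·sqrt(∑_{d∈δ} w_d·x_d²) ≤ r} equals (1 / ∏_{δ∈Δ} ∏_{d∈δ} (w_δ·√w_d)) · (rⁿ/n!) · ∏_{δ∈Δ} ( n_δ!·π^{n_δ/2} / Γ(n_δ/2 + 1) ). -/

import Mathlib

/-!
Scaling the coordinate `x_d` of the block `δ` by `w_δ √w_d` turns the weighted combined norm into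
the unweighted one, `y ↦ ∑_δ ‖y_δ‖`, at the cost of the Jacobian `∏_δ ∏_{d ∈ δ} w_δ √w_d`.

For any norm `g` on `ℝⁿ`, integrating `exp (-g)` over the level sets of `g` gives
`vol {g ≤ r} = rⁿ / n! · ∫ exp (-g)`. For the unweighted combined norm the integrand
`exp (-∑_δ ‖y_δ‖)` is a product over the blocks, so by Fubini the integral is
`∏_δ ∫ exp (-‖y_δ‖)`, and each factor is `n_δ! · vol (unit ball of ℝ^{n_δ})`.
-/

open Real MeasureTheory Measure Module
open scoped Pointwise

section NormLike

variable {E : Type*} [NormedAddCommGroup E] [NormedSpace ℝ E] [FiniteDimensional ℝ E]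
  [MeasurableSpace E] [BorelSpace E] (μ : Measure E) [IsAddHaarMeasure μ] {g : E → ℝ}

theorem measure_le_eq_pow_div_factorial_mul_integral_exp_neg
    (hadd : ∀ x y, g (x + y) ≤ g x + g y) (hzero : ∀ {x}, g x = 0 → x = 0)
    (hsmul : ∀ (t : ℝ) x, g (t • x) = |t| * g x) {r : ℝ} (hr : 0 ≤ r) :
    μ {x | g x ≤ r} =
      ENNReal.ofReal (r ^ finrank ℝ E / (finrank ℝ E).factorial * ∫ x, exp (-g x) ∂μ) := by
  have h0 : g 0 = 0 := by simpa using hsmul 0 0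
  have hneg (x : E) : g (-x) = g x := by simpa using hsmul (-1) x
  have hnonneg (x : E) : 0 ≤ g x := by
    have := hadd x (-x)
    rw [add_neg_cancel, h0, hneg] at this
    linarith
  rcases subsingleton_or_nontrivial E with _ | _
  · have hg (x : E) : g x = 0 := by rw [Subsingleton.elim x 0, h0]
    simp [hg, hr, finrank_zero_of_subsingleton, measureReal_def]
  rw [measure_le_eq_lt μ h0 hneg hadd hzero fun t x => (hsmul t x).le]
  rcases hr.eq_or_lt with rfl | hr
  · have : {x | g x < 0} = ∅ := Set.eq_empty_of_forall_notMem fun x hx => (hnonneg x).not_gt hx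
    simp [this, finrank_pos.ne']
  have hball : {x | g x < r} = r • {x | g x < 1} := by
    ext x
    rw [Set.mem_smul_set_iff_inv_smul_mem₀ hr.ne', Set.mem_ofPred_eq, Set.mem_ofPred_eq, hsmul,
      abs_inv, abs_of_pos hr, inv_mul_lt_iff₀ hr, mul_one]
  rw [hball, addHaar_smul_of_nonneg μ hr.le,
    measure_lt_one_eq_integral_div_gamma μ h0 hneg hadd hzero (fun t x => (hsmul t x).le) one_pos,
    ← ENNReal.ofReal_mul (by positivity)]
  simp_rw [rpow_one, div_one, Gamma_nat_eq_factorial]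
  rw [mul_div_assoc', div_mul_eq_mul_div]

end NormLike

theorem volume_preimage_mul_left_pi {ι : Type*} [Fintype ι] {b : ι → ℝ} (hb : ∀ i, b i ≠ 0)
    (s : Set (ι → ℝ)) :
    volume ((b * ·) ⁻¹' s) = ENNReal.ofReal |(∏ i, b i)⁻¹| * volume s := by
  classical
  have hdet : LinearMap.det (Matrix.toLin' (Matrix.diagonal b)) = ∏ i, b i := by
    rw [LinearMap.det_toLin', Matrix.det_diagonal]
  have hmul : ⇑(Matrix.toLin' (Matrix.diagonal b)) = (b * ·) := by
    ext x i
    simp [Matrix.mulVec_diagonal]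
  rw [← hmul, addHaar_preimage_linearMap _ (hdet ▸ Finset.prod_ne_zero_iff.mpr fun i _ => hb i),
    hdet]

theorem volume_measurePreserving_piCurry {ι : Type*} [Fintype ι] {κ : ι → Type*}
    [∀ i, Fintype (κ i)] (X : ∀ i, κ i → Type*) [∀ i j, MeasureSpace (X i j)]
    [∀ i j, SigmaFinite (volume : Measure (X i j))] :
    MeasurePreserving (MeasurableEquiv.piCurry X) volume volume := by
  refine MeasurePreserving.symm _ ⟨(MeasurableEquiv.piCurry X).symm.measurable, ?_⟩
  refine (pi_eq fun s hs => ?_).symm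
  rw [map_apply (MeasurableEquiv.piCurry X).symm.measurable (.univ_pi hs)]
  have hpre : (MeasurableEquiv.piCurry X).symm ⁻¹' Set.univ.pi s =
      Set.univ.pi fun i => Set.univ.pi fun j => s ⟨i, j⟩ := by
    ext x
    simp [Sigma.forall, Sigma.uncurry]
  rw [hpre, volume_pi, pi_pi]
  simp_rw [volume_pi, pi_pi]
  rw [← Finset.univ_sigma_univ, Finset.prod_sigma]

theorem integral_exp_neg_norm_toLp (κ : Type*) [Fintype κ] :
    ∫ y : κ → ℝ, exp (-‖WithLp.toLp 2 y‖) =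
      (Fintype.card κ).factorial * π ^ ((Fintype.card κ : ℝ) / 2) /
        Gamma ((Fintype.card κ : ℝ) / 2 + 1) := by
  rw [(PiLp.volume_preserving_toLp κ).integral_comp
    (MeasurableEquiv.toLp 2 (κ → ℝ)).measurableEmbedding fun x => exp (-‖x‖)]
  rcases isEmpty_or_nonempty κ with _ | _
  · simp [volume_euclideanSpace_eq_dirac]
  have hball := measure_unitBall_eq_integral_div_gamma (volume : Measure (EuclideanSpace ℝ κ))
    one_pos
  simp only [EuclideanSpace.volume_ball, finrank_euclideanSpace, ENNReal.ofReal_one, one_pow,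
    one_mul, rpow_one, div_one, Gamma_nat_eq_factorial] at hball
  rw [ENNReal.ofReal_eq_ofReal_iff (by positivity)
    (div_nonneg (integral_nonneg fun _ => (exp_pos _).le) (by positivity))] at hball
  rw [rpow_div_two_eq_sqrt _ pi_nonneg, rpow_natCast, mul_div_assoc, hball]
  field_simp

section Partition

variable {ι : Type*} {Δ : Finset (Finset ι)}

noncomputable def sigmaEquivOfPartition (hdisj : (Δ : Set (Finset ι)).PairwiseDisjoint id)
    (hcov : ∀ i, ∃ δ ∈ Δ, i ∈ δ) : (Σ δ : Δ, ↥δ.1) ≃ ι :=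
  Equiv.ofBijective (fun p => p.2) ⟨fun p q hpq => by
    replace hpq : (p.2 : ι) = q.2 := hpq
    have hblock : p.1 = q.1 := by
      by_contra hne
      exact Finset.disjoint_left.mp (hdisj p.1.2 q.1.2 (Subtype.coe_ne_coe.mpr hne))
        p.2.2 (hpq ▸ q.2.2)
    exact Sigma.subtype_ext hblock hpq, fun i => by
    obtain ⟨δ, hδ, hi⟩ := hcov i
    exact ⟨⟨⟨δ, hδ⟩, ⟨i, hi⟩⟩, rfl⟩⟩

theorem integral_prod_restrict_eq_prod_integral [Fintype ι]
    (hdisj : (Δ : Set (Finset ι)).PairwiseDisjoint id) (hcov : ∀ i, ∃ δ ∈ Δ, i ∈ δ)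
    (F : ∀ δ : Δ, (↥δ.1 → ℝ) → ℝ) :
    ∫ x : ι → ℝ, ∏ δ : Δ, F δ (Finset.restrict δ x) = ∏ δ : Δ, ∫ y, F δ y := by
  let φ := (MeasurableEquiv.piCongrLeft (fun _ => ℝ) (sigmaEquivOfPartition hdisj hcov)).symm.trans
    (MeasurableEquiv.piCurry fun (δ : Δ) (_ : ↥δ.1) => ℝ)
  have hφ : MeasurePreserving φ volume volume :=
    (volume_measurePreserving_piCurry fun (δ : Δ) (_ : ↥δ.1) => ℝ).comp <|
      MeasurePreserving.symm _ <|
        volume_measurePreserving_piCongrLeft (fun _ => ℝ) (sigmaEquivOfPartition hdisj hcov)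
  rw [← integral_fintype_prod_volume_eq_prod, ← hφ.integral_comp']
  rfl

theorem sqrt_sum_sq_eq_norm_toLp (s : Finset ι) (y : ι → ℝ) :
    √(∑ i ∈ s, y i ^ 2) = ‖(WithLp.toLp 2 (s.restrict y) : EuclideanSpace ℝ s)‖ := by
  rw [EuclideanSpace.norm_eq, ← Finset.sum_coe_sort s]
  simp

variable (Δ) in
noncomputable def combinedNorm (y : ι → ℝ) : ℝ :=
  ∑ δ ∈ Δ, √(∑ i ∈ δ, y i ^ 2)

theorem combinedNorm_add_le (x y : ι → ℝ) :
    combinedNorm Δ (x + y) ≤ combinedNorm Δ x + combinedNorm Δ y := by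
  simp only [combinedNorm, sqrt_sum_sq_eq_norm_toLp, ← Finset.sum_add_distrib]
  exact Finset.sum_le_sum fun δ _ =>
    norm_add_le (WithLp.toLp 2 (δ.restrict x) : EuclideanSpace ℝ δ) (WithLp.toLp 2 (δ.restrict y))

theorem combinedNorm_smul (t : ℝ) (y : ι → ℝ) :
    combinedNorm Δ (t • y) = |t| * combinedNorm Δ y := by
  simp only [combinedNorm, sqrt_sum_sq_eq_norm_toLp, Finset.mul_sum]
  exact Finset.sum_congr rfl fun δ _ =>
    norm_smul t (WithLp.toLp 2 (δ.restrict y) : EuclideanSpace ℝ δ)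

theorem eq_zero_of_combinedNorm_eq_zero (hcov : ∀ i, ∃ δ ∈ Δ, i ∈ δ) {y : ι → ℝ}
    (hy : combinedNorm Δ y = 0) : y = 0 := by
  funext i
  obtain ⟨δ, hδ, hi⟩ := hcov i
  have hblock : √(∑ j ∈ δ, y j ^ 2) = 0 :=
    (Finset.sum_eq_zero_iff_of_nonneg fun _ _ => sqrt_nonneg _).mp hy δ hδ
  rw [sqrt_eq_zero (Finset.sum_nonneg fun _ _ => sq_nonneg _),
    Finset.sum_eq_zero_iff_of_nonneg fun _ _ => sq_nonneg _] at hblock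
  exact (pow_eq_zero_iff two_ne_zero).mp (hblock i hi)

theorem volume_combinedNorm_le [Fintype ι]
    (hdisj : (Δ : Set (Finset ι)).PairwiseDisjoint id) (hcov : ∀ i, ∃ δ ∈ Δ, i ∈ δ)
    {r : ℝ} (hr : 0 ≤ r) :
    volume {y : ι → ℝ | combinedNorm Δ y ≤ r} = ENNReal.ofReal
      (r ^ Fintype.card ι / (Fintype.card ι).factorial *
        ∏ δ ∈ Δ, (δ.card.factorial : ℝ) * π ^ ((δ.card : ℝ) / 2) /
          Gamma ((δ.card : ℝ) / 2 + 1)) := by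
  rw [measure_le_eq_pow_div_factorial_mul_integral_exp_neg volume combinedNorm_add_le
    (eq_zero_of_combinedNorm_eq_zero hcov) combinedNorm_smul hr, finrank_fintype_fun_eq_card]
  have hexp (y : ι → ℝ) : exp (-combinedNorm Δ y) =
      ∏ δ : Δ, exp (-‖(WithLp.toLp 2 (δ.1.restrict y) : EuclideanSpace ℝ δ.1)‖) := by
    rw [combinedNorm, ← Finset.sum_neg_distrib, exp_sum, ← Finset.prod_coe_sort]
    simp_rw [sqrt_sum_sq_eq_norm_toLp]
  simp_rw [hexp, integral_prod_restrict_eq_prod_integral hdisj hcov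
    fun δ z => exp (-‖WithLp.toLp 2 z‖), integral_exp_neg_norm_toLp, Fintype.card_coe]
  rw [Finset.prod_coe_sort Δ fun δ => (δ.card.factorial : ℝ) * π ^ ((δ.card : ℝ) / 2) /
    Gamma ((δ.card : ℝ) / 2 + 1)]

end Partition

theorem mul_sqrt_sum_mul_sq {ι : Type*} {s : Finset ι} {c : ℝ} (hc : 0 ≤ c) {a : ι → ℝ}
    (ha : ∀ i ∈ s, 0 ≤ a i) (x : ι → ℝ) :
    c * √(∑ i ∈ s, a i * x i ^ 2) = √(∑ i ∈ s, (c * √(a i) * x i) ^ 2) := by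
  have hterm : ∀ i ∈ s, (c * √(a i) * x i) ^ 2 = c ^ 2 * (a i * x i ^ 2) := fun i hi => by
    rw [mul_pow, mul_pow, sq_sqrt (ha i hi)]
    ring
  rw [Finset.sum_congr rfl hterm, ← Finset.mul_sum, sqrt_mul (sq_nonneg c), sqrt_sq hc]

theorem volume_weighted_combined_ball_general (n : ℕ) (Δ : Finset (Finset (Fin n)))
    (hdisj : ∀ δ₁ ∈ Δ, ∀ δ₂ ∈ Δ, δ₁ ≠ δ₂ → Disjoint δ₁ δ₂)
    (hcov : ∀ d : Fin n, ∃ δ ∈ Δ, d ∈ δ)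
    (wδ : Finset (Fin n) → ℝ) (wd : Fin n → ℝ)
    (hwδ : ∀ δ ∈ Δ, 0 < wδ δ) (hwd : ∀ d : Fin n, 0 < wd d)
    (r : ℝ) (hr : 0 ≤ r) :
    volume {x : Fin n → ℝ | (∑ δ ∈ Δ, wδ δ * Real.sqrt (∑ d ∈ δ, wd d * x d ^ 2)) ≤ r}
      = ENNReal.ofReal
          ((1 / ∏ δ ∈ Δ, ∏ d ∈ δ, (wδ δ * Real.sqrt (wd d))) *
            (r ^ n / (Nat.factorial n : ℝ)) *
            ∏ δ ∈ Δ, ((Nat.factorial δ.card : ℝ) * π ^ ((δ.card : ℝ) / 2) /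
              Real.Gamma ((δ.card : ℝ) / 2 + 1))) := by
  have hpart : (Δ : Set (Finset (Fin n))).PairwiseDisjoint id :=
    fun δ₁ h₁ δ₂ h₂ => hdisj δ₁ h₁ δ₂ h₂
  set e := sigmaEquivOfPartition hpart hcov
  set b : Fin n → ℝ := fun d => wδ (e.symm d).1 * √(wd d)
  have hb (d : Fin n) : 0 < b d := mul_pos (hwδ _ (e.symm d).1.2) (sqrt_pos.2 (hwd d))
  have hb_block : ∀ δ ∈ Δ, ∀ d ∈ δ, b d = wδ δ * √(wd d) := fun δ hδ d hd => by
    simp only [b]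
    rw [show e.symm d = ⟨⟨δ, hδ⟩, ⟨d, hd⟩⟩ from e.symm_apply_eq.mpr rfl]
  have hscale (x : Fin n → ℝ) :
      ∑ δ ∈ Δ, wδ δ * √(∑ d ∈ δ, wd d * x d ^ 2) = combinedNorm Δ (b * x) :=
    Finset.sum_congr rfl fun δ hδ => by
      rw [mul_sqrt_sum_mul_sq (hwδ δ hδ).le fun d _ => (hwd d).le]
      exact congrArg _ (Finset.sum_congr rfl fun d hd => by rw [Pi.mul_apply, hb_block δ hδ d hd])
  have hprod : ∏ d, b d = ∏ δ ∈ Δ, ∏ d ∈ δ, wδ δ * √(wd d) := by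
    have hunion : Δ.biUnion id = Finset.univ :=
      Finset.eq_univ_of_forall fun d => Finset.mem_biUnion.mpr (hcov d)
    rw [← hunion, Finset.prod_biUnion hpart]
    exact Finset.prod_congr rfl fun δ hδ => Finset.prod_congr rfl (hb_block δ hδ)
  simp_rw [hscale]
  change volume ((b * ·) ⁻¹' {y | combinedNorm Δ y ≤ r}) = _
  rw [volume_preimage_mul_left_pi fun d => (hb d).ne', volume_combinedNorm_le hpart hcov hr,
    ← ENNReal.ofReal_mul (abs_nonneg _), abs_of_pos (inv_pos.2 (Finset.prod_pos fun d _ => hb d)),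
    hprod, Fintype.card_fin, one_div, mul_assoc]

/-- Volume of the hyperball of radius r under the weighted combined metric. -/
theorem volume_weighted_combined_ball (n : ℕ) (Δ : Finset (Finset (Fin n)))
    (hne : ∀ δ ∈ Δ, δ.Nonempty)
    (hdisj : ∀ δ₁ ∈ Δ, ∀ δ₂ ∈ Δ, δ₁ ≠ δ₂ → Disjoint δ₁ δ₂)
    (hcov : ∀ d : Fin n, ∃ δ ∈ Δ, d ∈ δ)
    (wδ : Finset (Fin n) → ℝ) (wd : Fin n → ℝ)
    (hwδ : ∀ δ ∈ Δ, 0 < wδ δ) (hwd : ∀ d : Fin n, 0 < wd d)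
    (r : ℝ) (hr : 0 ≤ r) :
    volume {x : Fin n → ℝ | (∑ δ ∈ Δ, wδ δ * Real.sqrt (∑ d ∈ δ, wd d * x d ^ 2)) ≤ r}
      = ENNReal.ofReal
          ((1 / ∏ δ ∈ Δ, ∏ d ∈ δ, (wδ δ * Real.sqrt (wd d))) *
            (r ^ n / (Nat.factorial n : ℝ)) *
            ∏ δ ∈ Δ, ((Nat.factorial δ.card : ℝ) * π ^ ((δ.card : ℝ) / 2) /
              Real.Gamma ((δ.card : ℝ) / 2 + 1))) :=
  volume_weighted_combined_ball_general n Δ hdisj hcov wδ wd hwδ hwd r hr
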